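/- arXiv:2405.11108 — 3 statements merged into one kernel-verified Lean document; each statement's English description precedes it below -/
import Mathlib

section
/- Let a, b ∈ ℂ with b ≠ −1 and let φ be a ½-derivation of the deformative Schrödinger–Witt algebra 𝒲(a,b,1/2) such that for every m ∈ ℤ the elements φ(L_m) and φ(I_m) lie in the span of {L_m, I_m} and φ(Y_m) lies in the span of {Y_m}. Then φ is a scalar multiple of the identity map. -/
/-- Basis of the deformative Schrödinger–Witt algebra 𝒲(a,b,1/2):
`L m`, `I m`, and `Y m` (the latter denotes `Y_{m+1/2}`). -/
inductive SWBasis : Type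
  | L : ℤ → SWBasis
  | I : ℤ → SWBasis
  | Y : ℤ → SWBasis

/-- Underlying vector space of 𝒲(a,b,1/2): the free ℂ-module on `SWBasis`. -/
abbrev SW : Type := SWBasis →₀ ℂ

noncomputable def Lb (m : ℤ) : SW := Finsupp.single (SWBasis.L m) 1
noncomputable def Ib (m : ℤ) : SW := Finsupp.single (SWBasis.I m) 1
noncomputable def Yb (m : ℤ) : SW := Finsupp.single (SWBasis.Y m) 1

/-- The Lie bracket of 𝒲(a,b,1/2) on basis elements. -/
noncomputable def swBracketBasis (a b : ℂ) : SWBasis → SWBasis → SW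
  | SWBasis.L m, SWBasis.L n => ((n : ℂ) - (m : ℂ)) • Lb (m + n)
  | SWBasis.L m, SWBasis.I n => ((n : ℂ) + b * (m : ℂ) + a) • Ib (m + n)
  | SWBasis.I m, SWBasis.L n => -(((m : ℂ) + b * (n : ℂ) + a) • Ib (n + m))
  | SWBasis.L m, SWBasis.Y n =>
      ((n : ℂ) + 1 / 2 + ((b - 1) * (m : ℂ) + a) / 2) • Yb (m + n)
  | SWBasis.Y m, SWBasis.L n =>
      -(((m : ℂ) + 1 / 2 + ((b - 1) * (n : ℂ) + a) / 2) • Yb (n + m))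
  | SWBasis.Y m, SWBasis.Y n => ((n : ℂ) - (m : ℂ)) • Ib (m + n + 1)
  | _, _ => 0

/-- The Lie bracket of 𝒲(a,b,1/2), extended bilinearly from the basis. -/
noncomputable def swBracket (a b : ℂ) : SW →ₗ[ℂ] SW →ₗ[ℂ] SW :=
  Finsupp.lift (SW →ₗ[ℂ] SW) ℂ SWBasis fun x =>
    Finsupp.lift SW ℂ SWBasis fun y => swBracketBasis a b x y

/-- `φ` is a ½-derivation of 𝒲(a,b,1/2). -/
def IsHalfDerivationSW (a b : ℂ) (φ : SW →ₗ[ℂ] SW) : Prop :=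
  ∀ x y : SW, φ (swBracket a b x y) =
    (1 / 2 : ℂ) • (swBracket a b (φ x) y + swBracket a b x (φ y))

section helpers
variable {a b : ℂ}

lemma swBracket_single (a b : ℂ) (x y : SWBasis) :
    swBracket a b (Finsupp.single x 1) (Finsupp.single y 1) = swBracketBasis a b x y := by
  simp [swBracket, Finsupp.lift_apply, Finsupp.sum_single_index]

lemma brLL (m n : ℤ) : swBracket a b (Lb m) (Lb n) = ((n:ℂ) - m) • Lb (m+n) := by
  rw [Lb, Lb, swBracket_single]; rfl

lemma brLI (m n : ℤ) : swBracket a b (Lb m) (Ib n) = ((n:ℂ) + b*m + a) • Ib (m+n) := by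
  rw [Lb, Ib, swBracket_single]; rfl

lemma brIL (m n : ℤ) : swBracket a b (Ib m) (Lb n) = -((((m:ℂ)) + b*n + a) • Ib (m+n)) := by
  rw [Ib, Lb, swBracket_single]; show -(_ • Ib (n+m)) = _; rw [add_comm n m]

lemma brLY (m n : ℤ) : swBracket a b (Lb m) (Yb n) = ((n:ℂ) + 1/2 + ((b-1)*m + a)/2) • Yb (m+n) := by
  rw [Lb, Yb, swBracket_single]; rfl

lemma brYL (m n : ℤ) : swBracket a b (Yb m) (Lb n) = -((((m:ℂ)) + 1/2 + ((b-1)*n + a)/2) • Yb (m+n)) := by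
  rw [Yb, Lb, swBracket_single]; show -(_ • Yb (n+m)) = _; rw [add_comm n m]

lemma brYY (m n : ℤ) : swBracket a b (Yb m) (Yb n) = ((n:ℂ) - m) • Ib (m+n+1) := by
  rw [Yb, Yb, swBracket_single]; rfl

lemma brII (m n : ℤ) : swBracket a b (Ib m) (Ib n) = 0 := by
  rw [Ib, Ib, swBracket_single]; rfl

lemma brIY (m n : ℤ) : swBracket a b (Ib m) (Yb n) = 0 := by
  rw [Ib, Yb, swBracket_single]; rfl

lemma brYI (m n : ℤ) : swBracket a b (Yb m) (Ib n) = 0 := by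
  rw [Yb, Ib, swBracket_single]; rfl

end helpers

/-- a ½-derivation of 𝒲(a,b,1/2) (b ≠ −1) preserving the grading
(degree-0 homogeneous on the ℤ ⊔ (ℤ+1/2)-grading) is a scalar multiple of the identity. -/
theorem stmt0 (a b : ℂ) (hb : b ≠ -1) (φ : SW →ₗ[ℂ] SW)
    (hφ : IsHalfDerivationSW a b φ)
    (hL : ∀ m : ℤ, φ (Lb m) ∈ Submodule.span ℂ ({Lb m, Ib m} : Set SW))
    (hI : ∀ m : ℤ, φ (Ib m) ∈ Submodule.span ℂ ({Lb m, Ib m} : Set SW))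
    (hY : ∀ m : ℤ, φ (Yb m) ∈ Submodule.span ℂ ({Yb m} : Set SW)) :
    ∃ c : ℂ, φ = c • LinearMap.id := by
  choose α β hαβ using fun m => Submodule.mem_span_pair.mp (hL m)
  choose γ δ hγδ using fun m => Submodule.mem_span_pair.mp (hI m)
  choose ε hε using fun m => Submodule.mem_span_singleton.mp (hY m)
  -- equations from the L-L bracket
  have eqA : ∀ m n : ℤ, ((n:ℂ)-m) * α (m+n) * 2 = (α m + α n) * ((n:ℂ)-m) := by
    intro m n
    have h := hφ (Lb m) (Lb n)
    rw [brLL, map_smul, ← hαβ (m+n), ← hαβ m, ← hαβ n] at h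
    simp only [map_add, map_smul, LinearMap.add_apply, LinearMap.smul_apply,
      brLL, brLI, brIL, brII, smul_add, smul_neg, smul_smul, smul_zero, add_zero] at h
    have e := DFunLike.congr_fun h (SWBasis.L (m+n))
    simp [Lb, Ib, Finsupp.single_apply] at e
    linear_combination 2*e
  have eqB : ∀ m n : ℤ, ((n:ℂ)-m) * β (m+n) * 2 =
      β n * ((n:ℂ)+b*m+a) - β m * ((m:ℂ)+b*n+a) := by
    intro m n
    have h := hφ (Lb m) (Lb n)
    rw [brLL, map_smul, ← hαβ (m+n), ← hαβ m, ← hαβ n] at h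
    simp only [map_add, map_smul, LinearMap.add_apply, LinearMap.smul_apply,
      brLL, brLI, brIL, brII, smul_add, smul_neg, smul_smul, smul_zero, add_zero] at h
    have e := DFunLike.congr_fun h (SWBasis.I (m+n))
    simp [Lb, Ib, Finsupp.single_apply] at e
    linear_combination 2*e
  -- equation from the L-Y bracket
  have eqE : ∀ m n : ℤ, ((n:ℂ)+1/2+((b-1)*m+a)/2) * ε (m+n) * 2 =
      (α m + ε n) * ((n:ℂ)+1/2+((b-1)*m+a)/2) := by
    intro m n
    have h := hφ (Lb m) (Yb n)
    rw [brLY, map_smul, ← hε (m+n), ← hαβ m, ← hε n] at h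
    simp only [map_add, map_smul, LinearMap.add_apply, LinearMap.smul_apply,
      brLY, brIY, smul_add, smul_neg, smul_smul, smul_zero, add_zero] at h
    have e := DFunLike.congr_fun h (SWBasis.Y (m+n))
    simp [Yb, Finsupp.single_apply] at e
    linear_combination 2*e
  -- equations from the Y-Y bracket
  have eqG : ∀ m n : ℤ, ((n:ℂ)-m) * γ (m+n+1) = 0 := by
    intro m n
    have h := hφ (Yb m) (Yb n)
    rw [brYY, map_smul, ← hγδ (m+n+1), ← hε m, ← hε n] at h
    simp only [map_add, map_smul, LinearMap.add_apply, LinearMap.smul_apply,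
      brYY, smul_add, smul_neg, smul_smul, smul_zero, add_zero] at h
    have e := DFunLike.congr_fun h (SWBasis.L (m+n+1))
    simp [Lb, Ib, Finsupp.single_apply] at e
    rcases e with h0 | h0 <;> simp [h0]
  have eqD : ∀ m n : ℤ, ((n:ℂ)-m) * δ (m+n+1) * 2 = (ε m + ε n) * ((n:ℂ)-m) := by
    intro m n
    have h := hφ (Yb m) (Yb n)
    rw [brYY, map_smul, ← hγδ (m+n+1), ← hε m, ← hε n] at h
    simp only [map_add, map_smul, LinearMap.add_apply, LinearMap.smul_apply,
      brYY, smul_add, smul_neg, smul_smul, smul_zero, add_zero] at h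
    have e := DFunLike.congr_fun h (SWBasis.I (m+n+1))
    simp [Lb, Ib, Finsupp.single_apply] at e
    linear_combination 2*e
  set c := α 0 with hc
  -- α is constant
  have hα : ∀ m : ℤ, α m = c := by
    intro m
    rcases eq_or_ne m 0 with rfl | hm
    · rfl
    · have h := eqA m 0
      rw [add_zero] at h
      push_cast at h
      have hm' : (m:ℂ) ≠ 0 := Int.cast_ne_zero.mpr hm
      have h2 : (m:ℂ) * (α m - c) = 0 := by linear_combination -h
      rcases mul_eq_zero.mp h2 with h3 | h3
      · exact absurd h3 hm'
      · linear_combination h3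
  -- ε at "good" indices
  have hεg : ∀ n : ℤ, 2*(n:ℂ)+1+a ≠ 0 → ε n = c := by
    intro n hn
    have h := eqE 0 n
    rw [zero_add] at h
    push_cast at h
    rw [hα 0] at h
    have h2 : (2*(n:ℂ)+1+a) * (ε n - c) = 0 := by linear_combination 2*h
    rcases mul_eq_zero.mp h2 with h3 | h3
    · exact absurd h3 hn
    · linear_combination h3
  -- δ from ε for distinct indices
  have hδε : ∀ p q : ℤ, p ≠ q → δ (p+q+1) * 2 = ε p + ε q := by
    intro p q hpq
    have h := eqD p q
    have hpq' : (q:ℂ) - p ≠ 0 := by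
      intro h0
      apply hpq
      have : (p:ℂ) = q := by linear_combination -h0
      exact_mod_cast this
    have h2 : ((q:ℂ)-p) * (δ (p+q+1) * 2 - (ε p + ε q)) = 0 := by linear_combination h
    rcases mul_eq_zero.mp h2 with h3 | h3
    · exact absurd h3 hpq'
    · linear_combination h3
  -- ε is constant
  have hε' : ∀ n : ℤ, ε n = c := by
    intro n
    by_cases hn : 2*(n:ℂ)+1+a ≠ 0
    · exact hεg n hn
    · push_neg at hn
      -- n is the unique bad index
      have good : ∀ k : ℤ, k ≠ n → ε k = c := by
        intro k hk
        apply hεg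
        intro h0
        apply hk
        have : (k:ℂ) = n := by linear_combination (h0 - hn)/2
        exact_mod_cast this
      have h1 : δ (n + (n+1) + 1) * 2 = ε n + ε (n+1) := hδε n (n+1) (by omega)
      have h2 : δ ((n+2) + (n-1) + 1) * 2 = ε (n+2) + ε (n-1) := hδε (n+2) (n-1) (by omega)
      rw [good (n+1) (by omega), good (n+2) (by omega), good (n-1) (by omega)] at *
      have hix : n + (n+1) + 1 = (n+2) + (n-1) + 1 := by omega
      rw [hix] at h1
      linear_combination h2 - h1
  -- δ is constant
  have hδ : ∀ k : ℤ, δ k = c := by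
    intro k
    rcases eq_or_ne k (-1) with rfl | hk
    · have h := hδε 0 (-2) (by omega)
      norm_num at h
      rw [hε' 0, hε' (-2)] at h
      linear_combination h/2
    · have h := hδε k (-1) (by omega)
      have hix : k + -1 + 1 = k := by omega
      rw [hix, hε' k, hε' (-1)] at h
      linear_combination h/2
  -- γ is zero
  have hγ : ∀ k : ℤ, γ k = 0 := by
    intro k
    rcases eq_or_ne k (-1) with rfl | hk
    · have h := eqG 1 (-3)
      norm_num at h
      exact h
    · have h := eqG (-1) k
      have hix : -1 + k + 1 = k := by omega
      rw [hix] at h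
      push_cast at h
      have hk' : (k:ℂ) + 1 ≠ 0 := by
        intro h0
        apply hk
        have : (k:ℂ) = ((-1 : ℤ) : ℂ) := by push_cast; linear_combination h0
        exact_mod_cast this
      rcases mul_eq_zero.mp h with h3 | h3
      · exact absurd (by linear_combination h3) hk'
      · exact h3
  -- the S relations for β
  have S : ∀ n : ℤ, β n * ((n:ℂ) - a) = -(β 0 * (b*n+a)) := by
    intro n
    have h := eqB 0 n
    rw [zero_add] at h
    push_cast at h
    linear_combination h
  -- β 0 = 0
  have hβ0 : β 0 = 0 := by
    have t11 := eqB 1 (-1); norm_num at t11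
    have t12 := eqB 1 (-2); norm_num at t12
    have t21 := eqB 2 (-1); norm_num at t21
    have s1 := S 1; have sm1 := S (-1); have s2 := S 2; have sm2 := S (-2)
    push_cast at s1 sm1 s2 sm2
    have key : β 0 * (24*(b+1)) = 0 := by
      linear_combination
        ((1-a)*(-2-a)*(-1-a)) * t12 + (6*(1-a)*(-2-a)) * sm1
          + ((1-a)*(-1-a)*(b+a-2)) * sm2 + (-((-2-a)*(-1-a)*(1-2*b+a))) * s1
        - ((2-a)*(-1-a)*(1-a)) * t21 - (6*(2-a)*(-1-a)) * s1
          - ((2-a)*(1-a)*(2*b+a-1)) * sm1 + ((-1-a)*(1-a)*(2-b+a)) * s2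
        - (6*((1-a)*(1+a))) * t11 + (6*(1+a)*(1-b+a)) * s1 + (6*(1-a)*(b+a-1)) * sm1
    have hb' : (24:ℂ)*(b+1) ≠ 0 := by
      intro h0
      rcases mul_eq_zero.mp h0 with h1 | h1
      · norm_num at h1
      · exact hb (by linear_combination h1)
    rcases mul_eq_zero.mp key with h1 | h1
    · exact h1
    · exact absurd h1 hb'
  -- β is zero
  have hβ : ∀ k : ℤ, β k = 0 := by
    intro k
    by_cases hka : (k:ℂ) = a
    · rcases eq_or_ne k 0 with rfl | hk0
      · exact hβ0
      · have hk' : (k:ℂ) ≠ 0 := Int.cast_ne_zero.mpr hk0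
        have hmk : β (-k) = 0 := by
          have h := S (-k)
          push_cast at h
          rw [hβ0] at h
          have h2 : β (-k) * (-(k:ℂ) - a) = 0 := by linear_combination h
          rcases mul_eq_zero.mp h2 with h3 | h3
          · exact h3
          · exfalso; apply hk'; rw [← hka] at h3; linear_combination -h3/2
        have h2k : β (2*k) = 0 := by
          have h := S (2*k)
          push_cast at h
          rw [hβ0] at h
          have h2 : β (2*k) * (2*(k:ℂ) - a) = 0 := by linear_combination h
          rcases mul_eq_zero.mp h2 with h3 | h3
          · exact h3
          · exfalso; apply hk'; rw [← hka] at h3; linear_combination h3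
        have h := eqB (2*k) (-k)
        have hix : 2*k + -k = k := by omega
        rw [hix, hmk, h2k] at h
        push_cast at h
        have h2 : (k:ℂ) * (β k * 6) = 0 := by linear_combination -h
        rcases mul_eq_zero.mp h2 with h3 | h3
        · exact absurd h3 hk'
        · linear_combination h3/6
    · have h := S k
      rw [hβ0] at h
      have h2 : β k * ((k:ℂ) - a) = 0 := by linear_combination h
      rcases mul_eq_zero.mp h2 with h3 | h3
      · exact h3
      · exact absurd h3 (sub_ne_zero.mpr hka)
  -- conclude
  refine ⟨c, ?_⟩
  have hsingle : ∀ x : SWBasis, φ (Finsupp.single x 1) = c • Finsupp.single x 1 := by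
    intro x
    cases x with
    | L m =>
        have := (hαβ m).symm
        rw [hα m, hβ m] at this
        simpa [Lb, Ib] using this
    | I m =>
        have := (hγδ m).symm
        rw [hγ m, hδ m] at this
        simpa [Lb, Ib] using this
    | Y m =>
        have := (hε m).symm
        rw [hε' m] at this
        simpa [Yb] using this
  apply Finsupp.lhom_ext
  intro x t
  have h1 : (Finsupp.single x t : SW) = t • Finsupp.single x 1 := by
    rw [Finsupp.smul_single, smul_eq_mul, mul_one]
  rw [h1, map_smul, map_smul, hsingle x, LinearMap.smul_apply, LinearMap.id_apply,
    smul_comm]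
end

section
/- Let a, b ∈ ℂ with b ≠ −1. Then every ½-derivation of the deformative Schrödinger–Witt algebra 𝒲(a,b,1/2) is a scalar multiple of the identity map. -/
noncomputable instance : DecidableEq SWBasis := Classical.decEq _

-- master lemmas
lemma br_left (a b : ℂ) (u : SWBasis) (z : SW) :
    swBracket a b (Finsupp.single u 1) z
      = z.sum fun v cv => cv • swBracketBasis a b u v := by
  simp [swBracket, Finsupp.lift_apply, Finsupp.sum_single_index]

lemma br_right (a b : ℂ) (z : SW) (u : SWBasis) :
    swBracket a b z (Finsupp.single u 1)
      = z.sum fun v cv => cv • swBracketBasis a b v u := by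
  simp only [swBracket, Finsupp.lift_apply]
  rw [Finsupp.sum, Finsupp.sum, LinearMap.coe_sum, Finset.sum_apply]
  refine Finset.sum_congr rfl fun v hv => ?_
  simp [Finsupp.lift_apply, Finsupp.sum_single_index]

lemma sum_apply' (z : SW) (g : SWBasis → ℂ → SW) (w : SWBasis) :
    (z.sum g) w = z.sum fun v cv => g v cv w := by
  rw [Finsupp.sum, Finsupp.finset_sum_apply]; rfl

open SWBasis in
lemma evR_L_L (a b : ℂ) (z : SW) (n p : ℤ) :
    (swBracket a b z (Lb n)) (L p) = (2*(n:ℂ) - p) * z (L (p - n)) := by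
  rw [Lb, br_right, sum_apply']
  rw [Finsupp.sum_eq_single (L (p - n))]
  · have h : p - n + n = p := by ring
    simp [swBracketBasis, Lb, Finsupp.smul_apply, h, Finsupp.single_apply]
    ring
  · intro v hv hne
    cases v with
    | L j =>
        have hj : j + n ≠ p := fun h => hne (by rw [show j = p - n by omega])
        simp [swBracketBasis, Lb, Finsupp.smul_apply, Finsupp.single_apply, hj]
    | I j => simp [swBracketBasis, Ib, Finsupp.smul_apply, Finsupp.single_apply]
    | Y j => simp [swBracketBasis, Yb, Finsupp.smul_apply, Finsupp.single_apply]
  · simp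

open SWBasis in
lemma evR_L_I (a b : ℂ) (z : SW) (n p : ℤ) :
    (swBracket a b z (Lb n)) (I p)
      = -(((p:ℂ)-n) + b*n + a) * z (I (p - n)) := by
  rw [Lb, br_right, sum_apply']
  rw [Finsupp.sum_eq_single (I (p - n))]
  · have h : n + (p - n) = p := by ring
    simp [swBracketBasis, Ib, Finsupp.smul_apply, h, Finsupp.single_apply]
    ring
  · intro v hv hne
    cases v with
    | L j => simp [swBracketBasis, Lb, Finsupp.smul_apply, Finsupp.single_apply]
    | I j =>
        have hj : n + j ≠ p := fun h => hne (by rw [show j = p - n by omega])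
        simp [swBracketBasis, Ib, Finsupp.smul_apply, Finsupp.single_apply, hj]
    | Y j => simp [swBracketBasis, Yb, Finsupp.smul_apply, Finsupp.single_apply]
  · simp

open SWBasis in
lemma evR_L_Y (a b : ℂ) (z : SW) (n p : ℤ) :
    (swBracket a b z (Lb n)) (Y p)
      = -(((p:ℂ)-n) + 1/2 + ((b-1)*n + a)/2) * z (Y (p - n)) := by
  rw [Lb, br_right, sum_apply']
  rw [Finsupp.sum_eq_single (Y (p - n))]
  · have h : n + (p - n) = p := by ring
    simp [swBracketBasis, Yb, Finsupp.smul_apply, h, Finsupp.single_apply]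
    ring
  · intro v hv hne
    cases v with
    | L j => simp [swBracketBasis, Lb, Finsupp.smul_apply, Finsupp.single_apply]
    | I j => simp [swBracketBasis, Ib, Finsupp.smul_apply, Finsupp.single_apply]
    | Y j =>
        have hj : n + j ≠ p := fun h => hne (by rw [show j = p - n by omega])
        simp [swBracketBasis, Yb, Finsupp.smul_apply, Finsupp.single_apply, hj]
  · simp

open SWBasis in
lemma evR_I_I (a b : ℂ) (z : SW) (n p : ℤ) :
    (swBracket a b z (Ib n)) (I p)
      = ((n:ℂ) + b*((p:ℂ)-n) + a) * z (L (p - n)) := by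
  rw [Ib, br_right, sum_apply']
  rw [Finsupp.sum_eq_single (L (p - n))]
  · have h : p - n + n = p := by ring
    simp [swBracketBasis, Ib, Finsupp.smul_apply, h, Finsupp.single_apply]
    ring
  · intro v hv hne
    cases v with
    | L j =>
        have hj : j + n ≠ p := fun h => hne (by rw [show j = p - n by omega])
        simp [swBracketBasis, Ib, Finsupp.smul_apply, Finsupp.single_apply, hj]
    | I j => simp [swBracketBasis]
    | Y j => simp [swBracketBasis]
  · simp

open SWBasis in
lemma evR_Y_L (a b : ℂ) (z : SW) (n p : ℤ) :
    (swBracket a b z (Yb n)) (L p) = 0 := by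
  rw [Yb, br_right, sum_apply']
  apply Finset.sum_eq_zero
  intro v hv
  cases v with
  | L j => simp [swBracketBasis, Yb, Finsupp.smul_apply, Finsupp.single_apply]
  | I j => simp [swBracketBasis]
  | Y j => simp [swBracketBasis, Ib, Finsupp.smul_apply, Finsupp.single_apply]

open SWBasis in
lemma evR_Y_I (a b : ℂ) (z : SW) (n p : ℤ) :
    (swBracket a b z (Yb n)) (I p)
      = (2*(n:ℂ) + 1 - p) * z (Y (p - n - 1)) := by
  rw [Yb, br_right, sum_apply']
  rw [Finsupp.sum_eq_single (Y (p - n - 1))]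
  · have h : p - n - 1 + n + 1 = p := by ring
    simp [swBracketBasis, Ib, Finsupp.smul_apply, h, Finsupp.single_apply]
    ring
  · intro v hv hne
    cases v with
    | L j => simp [swBracketBasis, Yb, Finsupp.smul_apply, Finsupp.single_apply]
    | I j => simp [swBracketBasis]
    | Y j =>
        have hj : j + n + 1 ≠ p := fun h => hne (by rw [show j = p - n - 1 by omega])
        simp [swBracketBasis, Ib, Finsupp.smul_apply, Finsupp.single_apply, hj]
  · simp

open SWBasis in
lemma evR_Y_Y (a b : ℂ) (z : SW) (n p : ℤ) :
    (swBracket a b z (Yb n)) (Y p)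
      = ((n:ℂ) + 1/2 + ((b-1)*((p:ℂ)-n) + a)/2) * z (L (p - n)) := by
  rw [Yb, br_right, sum_apply']
  rw [Finsupp.sum_eq_single (L (p - n))]
  · have h : p - n + n = p := by ring
    simp [swBracketBasis, Yb, Finsupp.smul_apply, h, Finsupp.single_apply]
    ring
  · intro v hv hne
    cases v with
    | L j =>
        have hj : j + n ≠ p := fun h => hne (by rw [show j = p - n by omega])
        simp [swBracketBasis, Yb, Finsupp.smul_apply, Finsupp.single_apply, hj]
    | I j => simp [swBracketBasis]
    | Y j => simp [swBracketBasis, Ib, Finsupp.smul_apply, Finsupp.single_apply]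
  · simp

open SWBasis in
lemma evL_L_L (a b : ℂ) (m : ℤ) (z : SW) (p : ℤ) :
    (swBracket a b (Lb m) z) (L p) = ((p:ℂ) - 2*m) * z (L (p - m)) := by
  rw [Lb, br_left, sum_apply']
  rw [Finsupp.sum_eq_single (L (p - m))]
  · have h : m + (p - m) = p := by ring
    simp [swBracketBasis, Lb, Finsupp.smul_apply, h, Finsupp.single_apply]
    ring
  · intro v hv hne
    cases v with
    | L j =>
        have hj : m + j ≠ p := fun h => hne (by rw [show j = p - m by omega])
        simp [swBracketBasis, Lb, Finsupp.smul_apply, Finsupp.single_apply, hj]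
    | I j => simp [swBracketBasis, Ib, Finsupp.smul_apply, Finsupp.single_apply]
    | Y j => simp [swBracketBasis, Yb, Finsupp.smul_apply, Finsupp.single_apply]
  · simp

open SWBasis in
lemma evL_L_I (a b : ℂ) (m : ℤ) (z : SW) (p : ℤ) :
    (swBracket a b (Lb m) z) (I p)
      = (((p:ℂ)-m) + b*m + a) * z (I (p - m)) := by
  rw [Lb, br_left, sum_apply']
  rw [Finsupp.sum_eq_single (I (p - m))]
  · have h : m + (p - m) = p := by ring
    simp [swBracketBasis, Ib, Finsupp.smul_apply, h, Finsupp.single_apply]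
    ring
  · intro v hv hne
    cases v with
    | L j => simp [swBracketBasis, Lb, Finsupp.smul_apply, Finsupp.single_apply]
    | I j =>
        have hj : m + j ≠ p := fun h => hne (by rw [show j = p - m by omega])
        simp [swBracketBasis, Ib, Finsupp.smul_apply, Finsupp.single_apply, hj]
    | Y j => simp [swBracketBasis, Yb, Finsupp.smul_apply, Finsupp.single_apply]
  · simp

open SWBasis in
lemma evL_L_Y (a b : ℂ) (m : ℤ) (z : SW) (p : ℤ) :
    (swBracket a b (Lb m) z) (Y p)
      = (((p:ℂ)-m) + 1/2 + ((b-1)*m + a)/2) * z (Y (p - m)) := by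
  rw [Lb, br_left, sum_apply']
  rw [Finsupp.sum_eq_single (Y (p - m))]
  · have h : m + (p - m) = p := by ring
    simp [swBracketBasis, Yb, Finsupp.smul_apply, h, Finsupp.single_apply]
    ring
  · intro v hv hne
    cases v with
    | L j => simp [swBracketBasis, Lb, Finsupp.smul_apply, Finsupp.single_apply]
    | I j => simp [swBracketBasis, Ib, Finsupp.smul_apply, Finsupp.single_apply]
    | Y j =>
        have hj : m + j ≠ p := fun h => hne (by rw [show j = p - m by omega])
        simp [swBracketBasis, Yb, Finsupp.smul_apply, Finsupp.single_apply, hj]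
  · simp

open SWBasis in
lemma evL_Y_L (a b : ℂ) (m : ℤ) (z : SW) (p : ℤ) :
    (swBracket a b (Yb m) z) (L p) = 0 := by
  rw [Yb, br_left, sum_apply']
  apply Finset.sum_eq_zero
  intro v hv
  cases v with
  | L j => simp [swBracketBasis, Yb, Finsupp.smul_apply, Finsupp.single_apply]
  | I j => simp [swBracketBasis]
  | Y j => simp [swBracketBasis, Ib, Finsupp.smul_apply, Finsupp.single_apply]

open SWBasis in
lemma evL_Y_I (a b : ℂ) (m : ℤ) (z : SW) (p : ℤ) :
    (swBracket a b (Yb m) z) (I p)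
      = ((p:ℂ) - 2*m - 1) * z (Y (p - m - 1)) := by
  rw [Yb, br_left, sum_apply']
  rw [Finsupp.sum_eq_single (Y (p - m - 1))]
  · have h : m + (p - m - 1) + 1 = p := by ring
    simp [swBracketBasis, Ib, Finsupp.smul_apply, h, Finsupp.single_apply]
    ring
  · intro v hv hne
    cases v with
    | L j => simp [swBracketBasis, Yb, Finsupp.smul_apply, Finsupp.single_apply]
    | I j => simp [swBracketBasis]
    | Y j =>
        have hj : m + j + 1 ≠ p := fun h => hne (by rw [show j = p - m - 1 by omega])
        simp [swBracketBasis, Ib, Finsupp.smul_apply, Finsupp.single_apply, hj]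
  · simp

open SWBasis in
lemma evL_I_I (a b : ℂ) (m : ℤ) (z : SW) (p : ℤ) :
    (swBracket a b (Ib m) z) (I p)
      = -((m:ℂ) + b*((p:ℂ)-m) + a) * z (L (p - m)) := by
  rw [Ib, br_left, sum_apply']
  rw [Finsupp.sum_eq_single (L (p - m))]
  · have h : p - m + m = p := by ring
    simp [swBracketBasis, Ib, Finsupp.smul_apply, h, Finsupp.single_apply]
    ring
  · intro v hv hne
    cases v with
    | L j =>
        have hj : j + m ≠ p := fun h => hne (by rw [show j = p - m by omega])
        simp [swBracketBasis, Ib, Finsupp.smul_apply, Finsupp.single_apply, hj]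
    | I j => simp [swBracketBasis]
    | Y j => simp [swBracketBasis]
  · simp


lemma br_LL (a b : ℂ) (m n : ℤ) :
    swBracket a b (Lb m) (Lb n) = ((n:ℂ) - m) • Lb (m+n) := by
  rw [Lb, Lb, br_left, Finsupp.sum_single_index] <;> simp [swBracketBasis]

lemma br_LI (a b : ℂ) (m n : ℤ) :
    swBracket a b (Lb m) (Ib n) = ((n:ℂ) + b*m + a) • Ib (m+n) := by
  rw [Lb, Ib, br_left, Finsupp.sum_single_index] <;> simp [swBracketBasis]

lemma br_LY (a b : ℂ) (m n : ℤ) :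
    swBracket a b (Lb m) (Yb n)
      = ((n:ℂ) + 1/2 + ((b-1)*m + a)/2) • Yb (m+n) := by
  rw [Lb, Yb, br_left, Finsupp.sum_single_index] <;> simp [swBracketBasis]

lemma br_YY (a b : ℂ) (m n : ℤ) :
    swBracket a b (Yb m) (Yb n) = ((n:ℂ) - m) • Ib (m+n+1) := by
  rw [Yb, Yb, br_left, Finsupp.sum_single_index] <;> simp [swBracketBasis]

lemma br_IY (a b : ℂ) (m n : ℤ) :
    swBracket a b (Ib m) (Yb n) = 0 := by
  rw [Ib, Yb, br_left, Finsupp.sum_single_index] <;> simp [swBracketBasis]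

noncomputable def cA (φ : SW →ₗ[ℂ] SW) (n p : ℤ) : ℂ := φ (Lb n) (SWBasis.L p)
noncomputable def cB (φ : SW →ₗ[ℂ] SW) (n p : ℤ) : ℂ := φ (Lb n) (SWBasis.I p)
noncomputable def cC (φ : SW →ₗ[ℂ] SW) (n p : ℤ) : ℂ := φ (Lb n) (SWBasis.Y p)
noncomputable def cP (φ : SW →ₗ[ℂ] SW) (n p : ℤ) : ℂ := φ (Ib n) (SWBasis.L p)
noncomputable def cQ (φ : SW →ₗ[ℂ] SW) (n p : ℤ) : ℂ := φ (Ib n) (SWBasis.I p)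
noncomputable def cR (φ : SW →ₗ[ℂ] SW) (n p : ℤ) : ℂ := φ (Ib n) (SWBasis.Y p)
noncomputable def cU (φ : SW →ₗ[ℂ] SW) (n p : ℤ) : ℂ := φ (Yb n) (SWBasis.L p)
noncomputable def cV (φ : SW →ₗ[ℂ] SW) (n p : ℤ) : ℂ := φ (Yb n) (SWBasis.I p)
noncomputable def cW (φ : SW →ₗ[ℂ] SW) (n p : ℤ) : ℂ := φ (Yb n) (SWBasis.Y p)

section Eqs
variable {a b : ℂ} {φ : SW →ₗ[ℂ] SW}

lemma eq1 (hφ : IsHalfDerivationSW a b φ) (m n p : ℤ) :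
    2*((n:ℂ)-m) * cA φ (m+n) p
      = (2*(n:ℂ)-p) * cA φ m (p-n) + ((p:ℂ)-2*m) * cA φ n (p-m) := by
  have h := DFunLike.congr_fun (hφ (Lb m) (Lb n)) (SWBasis.L p)
  rw [br_LL, map_smul] at h
  simp only [Finsupp.smul_apply, Finsupp.add_apply, evR_L_L, evL_L_L,
    smul_eq_mul] at h
  unfold cA
  linear_combination 2*h

lemma eq2 (hφ : IsHalfDerivationSW a b φ) (m n p : ℤ) :
    2*((n:ℂ)-m) * cB φ (m+n) p
      = -(((p:ℂ)-n) + b*n + a) * cB φ m (p-n)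
        + (((p:ℂ)-m) + b*m + a) * cB φ n (p-m) := by
  have h := DFunLike.congr_fun (hφ (Lb m) (Lb n)) (SWBasis.I p)
  rw [br_LL, map_smul] at h
  simp only [Finsupp.smul_apply, Finsupp.add_apply, evR_L_I, evL_L_I,
    smul_eq_mul] at h
  unfold cB
  linear_combination 2*h

lemma eq3 (hφ : IsHalfDerivationSW a b φ) (m n p : ℤ) :
    2*((n:ℂ)-m) * cC φ (m+n) p
      = -(((p:ℂ)-n) + 1/2 + ((b-1)*n + a)/2) * cC φ m (p-n)
        + (((p:ℂ)-m) + 1/2 + ((b-1)*m + a)/2) * cC φ n (p-m) := by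
  have h := DFunLike.congr_fun (hφ (Lb m) (Lb n)) (SWBasis.Y p)
  rw [br_LL, map_smul] at h
  simp only [Finsupp.smul_apply, Finsupp.add_apply, evR_L_Y, evL_L_Y,
    smul_eq_mul] at h
  unfold cC
  linear_combination 2*h

lemma eq5 (hφ : IsHalfDerivationSW a b φ) (m n p : ℤ) :
    2*((n:ℂ) + b*m + a) * cQ φ (m+n) p
      = ((n:ℂ) + b*((p:ℂ)-n) + a) * cA φ m (p-n)
        + (((p:ℂ)-m) + b*m + a) * cQ φ n (p-m) := by
  have h := DFunLike.congr_fun (hφ (Lb m) (Ib n)) (SWBasis.I p)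
  rw [br_LI, map_smul] at h
  simp only [Finsupp.smul_apply, Finsupp.add_apply, evR_I_I, evL_L_I,
    smul_eq_mul] at h
  unfold cQ cA
  linear_combination 2*h

lemma eq8 (hφ : IsHalfDerivationSW a b φ) (m n p : ℤ) :
    2*((n:ℂ) + 1/2 + ((b-1)*m + a)/2) * cU φ (m+n) p
      = ((p:ℂ)-2*m) * cU φ n (p-m) := by
  have h := DFunLike.congr_fun (hφ (Lb m) (Yb n)) (SWBasis.L p)
  rw [br_LY, map_smul] at h
  simp only [Finsupp.smul_apply, Finsupp.add_apply, evR_Y_L, evL_L_L,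
    smul_eq_mul] at h
  unfold cU
  linear_combination 2*h

lemma eq9 (hφ : IsHalfDerivationSW a b φ) (m n p : ℤ) :
    2*((n:ℂ) + 1/2 + ((b-1)*m + a)/2) * cV φ (m+n) p
      = (2*(n:ℂ)+1-p) * cC φ m (p-n-1)
        + (((p:ℂ)-m) + b*m + a) * cV φ n (p-m) := by
  have h := DFunLike.congr_fun (hφ (Lb m) (Yb n)) (SWBasis.I p)
  rw [br_LY, map_smul] at h
  simp only [Finsupp.smul_apply, Finsupp.add_apply, evR_Y_I, evL_L_I,
    smul_eq_mul] at h
  unfold cV cC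
  linear_combination 2*h

lemma eq10 (hφ : IsHalfDerivationSW a b φ) (m n p : ℤ) :
    2*((n:ℂ) + 1/2 + ((b-1)*m + a)/2) * cW φ (m+n) p
      = ((n:ℂ) + 1/2 + ((b-1)*((p:ℂ)-n) + a)/2) * cA φ m (p-n)
        + (((p:ℂ)-m) + 1/2 + ((b-1)*m + a)/2) * cW φ n (p-m) := by
  have h := DFunLike.congr_fun (hφ (Lb m) (Yb n)) (SWBasis.Y p)
  rw [br_LY, map_smul] at h
  simp only [Finsupp.smul_apply, Finsupp.add_apply, evR_Y_Y, evL_L_Y,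
    smul_eq_mul] at h
  unfold cW cA
  linear_combination 2*h

lemma eq12 (hφ : IsHalfDerivationSW a b φ) (m n p : ℤ) :
    2*((n:ℂ)-m) * cP φ (m+n+1) p = 0 := by
  have h := DFunLike.congr_fun (hφ (Yb m) (Yb n)) (SWBasis.L p)
  rw [br_YY, map_smul] at h
  simp only [Finsupp.smul_apply, Finsupp.add_apply, evR_Y_L, evL_Y_L,
    smul_eq_mul] at h
  unfold cP
  linear_combination 2*h

lemma eq13 (hφ : IsHalfDerivationSW a b φ) (m n p : ℤ) :
    2*((n:ℂ)-m) * cQ φ (m+n+1) p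
      = (2*(n:ℂ)+1-p) * cW φ m (p-n-1)
        + ((p:ℂ)-2*m-1) * cW φ n (p-m-1) := by
  have h := DFunLike.congr_fun (hφ (Yb m) (Yb n)) (SWBasis.I p)
  rw [br_YY, map_smul] at h
  simp only [Finsupp.smul_apply, Finsupp.add_apply, evR_Y_I, evL_Y_I,
    smul_eq_mul] at h
  unfold cQ cW
  linear_combination 2*h

lemma eq16 (hφ : IsHalfDerivationSW a b φ) (m n p : ℤ) :
    0 = (2*(n:ℂ)+1-p) * cR φ m (p-n-1)
        - ((m:ℂ) + b*((p:ℂ)-m) + a) * cU φ n (p-m) := by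
  have h := DFunLike.congr_fun (hφ (Ib m) (Yb n)) (SWBasis.I p)
  rw [br_IY] at h
  simp only [map_zero, Finsupp.smul_apply, Finsupp.add_apply, evR_Y_I,
    evL_I_I, smul_eq_mul, Finsupp.coe_zero, Pi.zero_apply] at h
  unfold cR cU
  linear_combination 2*h

end Eqs


lemma mulz {x y : ℂ} (h : x * y = 0) (hx : x ≠ 0) : y = 0 := by
  rcases mul_eq_zero.mp h with h' | h'
  · exact absurd h' hx
  · exact h'

lemma intCast_injC {x y : ℤ} (h : (x:ℂ) = (y:ℂ)) : x = y := by exact_mod_cast h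

lemma intCast_nzC {x : ℤ} (h : x ≠ 0) : (x:ℂ) ≠ 0 := Int.cast_ne_zero.mpr h

lemma key (β σ : ℂ) (hβ : β ≠ -1) (h : ℤ → ℂ)
    (E : ∀ m n : ℤ, 2*((n:ℂ)-m) * h (m+n)
        = ((n:ℂ)+σ+β*m) * h n - ((m:ℂ)+σ+β*n) * h m) :
    ∀ n, h n = 0 := by
  have h1β : (1:ℂ) + β ≠ 0 := fun hh => hβ (by linear_combination hh)
  have B1 : ∀ n : ℤ, ((n:ℂ) - σ) * h n = -(σ + β*(n:ℂ)) * h 0 := by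
    intro n
    have hE := E 0 n
    rw [show (0:ℤ)+n = n from by omega] at hE
    push_cast at hE
    linear_combination hE
  have G : ∀ m n : ℤ,
      ((1+β)*(m:ℂ)*(n:ℂ)*((n:ℂ)-(m:ℂ))*(β*((m:ℂ)+(n:ℂ)) - σ*(β-2))) * h 0 = 0 := by
    intro m n
    have hE := E m n
    have b1 := B1 m
    have b2 := B1 n
    have b3 := B1 (m+n)
    push_cast at hE b3
    linear_combination
      (-(((m:ℂ)-σ)*((n:ℂ)-σ)*((m:ℂ)+(n:ℂ)-σ))) * hE
      + (2*((n:ℂ)-(m:ℂ))*((m:ℂ)-σ)*((n:ℂ)-σ)) * b3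
      + (-(((n:ℂ)+σ+β*(m:ℂ))*((m:ℂ)-σ)*((m:ℂ)+(n:ℂ)-σ))) * b2
      + ((((m:ℂ)+σ+β*(n:ℂ))*((n:ℂ)-σ)*((m:ℂ)+(n:ℂ)-σ))) * b1
  have hc : h 0 = 0 := by
    by_cases hβ0 : β = 0
    · by_cases hσ : σ = 0
      · have h1 : h 1 = 0 := by
          have hx := B1 1
          rw [hβ0, hσ] at hx
          simpa using hx
        have hm1 : h (-1) = 0 := by
          have hx := B1 (-1)
          rw [hβ0, hσ] at hx
          push_cast at hx
          have : (-1 : ℂ) * h (-1) = 0 := by linear_combination hx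
          exact mulz this (by norm_num)
        have hE := E 1 (-1)
        rw [h1, hm1] at hE
        push_cast at hE
        have h4 : (4:ℂ) * h (0:ℤ) = 0 := by linear_combination -hE
        exact mulz h4 (by norm_num)
      · have hG := G 1 2
        rw [hβ0] at hG
        push_cast at hG
        have h' : (4*σ) * h (0:ℤ) = 0 := by linear_combination hG
        exact mulz h' (mul_ne_zero (by norm_num) hσ)
    · by_cases h3 : 3*β - σ*(β-2) = 0
      · have hG := G 2 (-1)
        push_cast at hG
        have h' : ((1+β)*β) * h (0:ℤ) = 0 := by
          linear_combination (-1/12)*hG + ((1+β) * h (0:ℤ) / 2) * h3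
        exact mulz h' (mul_ne_zero h1β hβ0)
      · have hG := G 1 2
        push_cast at hG
        have h' : ((1+β)*2*(3*β-σ*(β-2))) * h (0:ℤ) = 0 := by linear_combination hG
        exact mulz h' (mul_ne_zero (mul_ne_zero h1β two_ne_zero) h3)
  have hz : ∀ x : ℤ, (x:ℂ) ≠ σ → h x = 0 := by
    intro x hx
    have hx2 := B1 x
    rw [hc] at hx2
    have : ((x:ℂ) - σ) * h x = 0 := by linear_combination hx2
    exact mulz this (sub_ne_zero_of_ne hx)
  intro n
  by_cases hnσ : (n:ℂ) = σ
  · by_cases hn1 : n = -1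
    · subst hn1
      have hE := E 1 (-2)
      rw [show (1:ℤ) + -2 = -1 from by omega,
          hz (-2) (by rw [← hnσ]; intro hh; have := intCast_injC hh; omega),
          hz 1 (by rw [← hnσ]; intro hh; have := intCast_injC hh; omega)] at hE
      push_cast at hE
      have h' : (6:ℂ) * h (-1 : ℤ) = 0 := by linear_combination -hE
      exact mulz h' (by norm_num)
    · by_cases hn2 : n = -2
      · subst hn2
        have hE := E 1 (-3)
        rw [show (1:ℤ) + -3 = -2 from by omega,
            hz (-3) (by rw [← hnσ]; intro hh; have := intCast_injC hh; omega),
            hz 1 (by rw [← hnσ]; intro hh; have := intCast_injC hh; omega)] at hE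
        push_cast at hE
        have h' : (8:ℂ) * h (-2 : ℤ) = 0 := by linear_combination -hE
        exact mulz h' (by norm_num)
      · have hE := E (-1) (n+1)
        rw [hz (n+1) (by rw [← hnσ]; intro hh; have := intCast_injC hh; omega),
            hz (-1) (by rw [← hnσ]; intro hh; have := intCast_injC hh; omega)] at hE
        push_cast at hE
        have h' : (2*((n:ℂ)+2)) * h (-1 + (n+1)) = 0 := by linear_combination hE
        have hcz : (2*((n:ℂ)+2)) ≠ 0 := by
          intro hh
          apply hn2
          apply intCast_injC (x := n) (y := -2)
          push_cast
          linear_combination hh/2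
        have := mulz h' hcz
        rwa [show (-1 : ℤ) + (n+1) = n by omega] at this
  · exact hz n hnσ


section Families
variable {a b : ℂ} {φ : SW →ₗ[ℂ] SW}

lemma Bzero (hb : b ≠ -1) (hφ : IsHalfDerivationSW a b φ) (n p : ℤ) :
    cB φ n p = 0 := by
  have hkey := key b ((p:ℂ)-(n:ℂ)+a) hb (fun x => cB φ x (x + (p-n)))
    (by
      intro m n'
      have hE := eq2 hφ m n' (m+n'+(p-n))
      rw [show m+n'+(p-n)-n' = m+(p-n) from by omega,
          show m+n'+(p-n)-m = n'+(p-n) from by omega] at hE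
      push_cast at hE ⊢
      linear_combination hE)
    n
  simpa [show n + (p-n) = p from by omega] using hkey

lemma Czero (hb : b ≠ -1) (hφ : IsHalfDerivationSW a b φ) (n p : ℤ) :
    cC φ n p = 0 := by
  have hβ : (b-1)/2 ≠ -1 := fun hh => hb (by linear_combination 2*hh)
  have hkey := key ((b-1)/2) ((p:ℂ)-(n:ℂ)+1/2+a/2) hβ (fun x => cC φ x (x + (p-n)))
    (by
      intro m n'
      have hE := eq3 hφ m n' (m+n'+(p-n))
      rw [show m+n'+(p-n)-n' = m+(p-n) from by omega,
          show m+n'+(p-n)-m = n'+(p-n) from by omega] at hE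
      push_cast at hE ⊢
      linear_combination hE)
    n
  simpa [show n + (p-n) = p from by omega] using hkey

lemma Pzero (hφ : IsHalfDerivationSW a b φ) (t p : ℤ) : cP φ t p = 0 := by
  by_cases ht : t = -1
  · subst ht
    have hE := eq12 hφ 0 (-2) p
    rw [show (0:ℤ) + -2 + 1 = -1 from by omega] at hE
    push_cast at hE
    have h' : (-4:ℂ) * cP φ (-1) p = 0 := by linear_combination hE
    exact mulz h' (by norm_num)
  · have hE := eq12 hφ t (-1) p
    rw [show t + -1 + 1 = t from by omega] at hE
    push_cast at hE
    have h' : (2*((-1:ℂ)-t)) * cP φ t p = 0 := by linear_combination hE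
    refine mulz h' ?_
    intro hh
    apply ht
    apply intCast_injC (x := t) (y := -1)
    push_cast
    linear_combination -hh/2

lemma Adiag (hφ : IsHalfDerivationSW a b φ) (n : ℤ) : cA φ n n = cA φ 0 0 := by
  by_cases hn : n = 0
  · subst hn; rfl
  · have hE := eq1 hφ 0 n n
    rw [show (0:ℤ)+n = n from by omega, show n-n = (0:ℤ) from by omega,
        show n-(0:ℤ) = n from by omega] at hE
    push_cast at hE
    have h' : (n:ℂ) * (cA φ n n - cA φ 0 0) = 0 := by linear_combination hE
    have := mulz h' (intCast_nzC hn)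
    linear_combination this

lemma Ashift (hφ : IsHalfDerivationSW a b φ) {n p : ℤ} (hp : p ≠ 2*n) :
    cA φ n p = cA φ 0 (p-n) := by
  have hE := eq1 hφ 0 n p
  rw [show (0:ℤ)+n = n from by omega, show p-(0:ℤ) = p from by omega] at hE
  push_cast at hE
  have h' : (2*(n:ℂ)-p) * (cA φ n p - cA φ 0 (p-n)) = 0 := by linear_combination hE
  have hnz : (2*(n:ℂ)-p) ≠ 0 := by
    intro hh
    apply hp
    apply intCast_injC (x := p) (y := 2*n)
    push_cast
    linear_combination -hh
  have := mulz h' hnz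
  linear_combination this

lemma Aoff (hφ : IsHalfDerivationSW a b φ) (n k : ℤ) (hk : k ≠ 0) :
    cA φ n (n+k) = cA φ 0 k := by
  by_cases hnk : n = k
  · subst hnk
    rw [show n+n = 2*n from by omega]
    by_cases hk1 : n = -1
    · subst hk1
      have hE := eq1 hφ 1 (-2) (-2)
      rw [show (1:ℤ)+(-2) = -1 from by omega, show (-2:ℤ)-(-2) = 0 from by omega,
          show (-2:ℤ)-1 = -3 from by omega] at hE
      rw [Ashift hφ (show (0:ℤ) ≠ 2*1 by omega),
          Ashift hφ (show (-3:ℤ) ≠ 2*(-2) by omega)] at hE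
      rw [show (0:ℤ)-1 = -1 from by omega, show (-3:ℤ)-(-2) = -1 from by omega] at hE
      push_cast at hE
      have h' : (-6:ℂ) * (cA φ (-1) (2*(-1)) - cA φ 0 (-1)) = 0 := by
        rw [show (2*(-1) : ℤ) = -2 from by omega]
        linear_combination hE
      have := mulz h' (by norm_num)
      linear_combination this
    · by_cases hk2 : n = -2
      · subst hk2
        have hE := eq1 hφ 1 (-3) (-4)
        rw [show (1:ℤ)+(-3) = -2 from by omega, show (-4:ℤ)-(-3) = -1 from by omega,
            show (-4:ℤ)-1 = -5 from by omega] at hE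
        rw [Ashift hφ (show (-1:ℤ) ≠ 2*1 by omega),
            Ashift hφ (show (-5:ℤ) ≠ 2*(-3) by omega)] at hE
        rw [show (-1:ℤ)-1 = -2 from by omega, show (-5:ℤ)-(-3) = -2 from by omega] at hE
        push_cast at hE
        have h' : (-8:ℂ) * (cA φ (-2) (2*(-2)) - cA φ 0 (-2)) = 0 := by
          rw [show (2*(-2) : ℤ) = -4 from by omega]
          linear_combination hE
        have := mulz h' (by norm_num)
        linear_combination this
      · have hE := eq1 hφ (-1) (n+1) (2*n)
        rw [show (-1)+(n+1) = n from by omega, show 2*n-(n+1) = n-1 from by omega,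
            show 2*n-(-1) = 2*n+1 from by omega] at hE
        rw [Ashift hφ (show n-1 ≠ 2*(-1) by omega),
            Ashift hφ (show 2*n+1 ≠ 2*(n+1) by omega)] at hE
        rw [show n-1-(-1) = n from by omega, show 2*n+1-(n+1) = n from by omega] at hE
        push_cast at hE
        have h' : (2*((n:ℂ)+2)) * (cA φ n (2*n) - cA φ 0 n) = 0 := by
          linear_combination hE
        have hnz : (2*((n:ℂ)+2)) ≠ 0 := by
          intro hh
          apply hk2
          apply intCast_injC (x := n) (y := -2)
          push_cast
          linear_combination hh/2
        have := mulz h' hnz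
        linear_combination this
  · have := Ashift hφ (show n+k ≠ 2*n by omega)
    rwa [show n+k-n = k from by omega] at this

end Families


section Families2
variable {a b : ℂ} {φ : SW →ₗ[ℂ] SW}

lemma Q1lem (hφ : IsHalfDerivationSW a b φ) (k : ℤ) (x : ℤ) :
    ((x:ℂ)+a-k) * cQ φ x (x+k) = ((x:ℂ)+b*k+a) * cA φ 0 k := by
  have hE := eq5 hφ 0 x (x+k)
  rw [show (0:ℤ)+x = x from by omega, show x+k-x = k from by omega,
      show x+k-(0:ℤ) = x+k from by omega] at hE
  push_cast at hE
  linear_combination hE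

lemma Aoff0 (hb : b ≠ -1) (hφ : IsHalfDerivationSW a b φ) (k : ℤ) (hk : k ≠ 0) :
    cA φ 0 k = 0 := by
  have h1β : (1:ℂ) + b ≠ 0 := fun hh => hb (by linear_combination hh)
  have G : ∀ m x : ℤ,
      ((k:ℂ)*(m:ℂ)*(1+b)*(b*((k:ℂ)+(m:ℂ))+(2-b)*((x:ℂ)+a))) * cA φ 0 k = 0 := by
    intro m x
    have hE := eq5 hφ m x (m+x+k)
    rw [show m+x+k-x = m+k from by omega, show m+x+k-m = x+k from by omega] at hE
    rw [Aoff hφ m k hk] at hE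
    have q1 := Q1lem hφ k x
    have q2 := Q1lem hφ k (m+x)
    push_cast at hE q1 q2
    linear_combination
      (-((((x:ℂ)+a-(k:ℂ))*((m:ℂ)+(x:ℂ)+a-(k:ℂ))))) * hE
      + (2*((x:ℂ)+b*(m:ℂ)+a)*((x:ℂ)+a-(k:ℂ))) * q2
      + (-(((x:ℂ)+(k:ℂ)+b*(m:ℂ)+a)*((m:ℂ)+(x:ℂ)+a-(k:ℂ)))) * q1
  by_cases hb2 : b = 2
  · by_cases hk1 : k = -1
    · subst hk1
      have hG := G 2 0
      rw [hb2] at hG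
      push_cast at hG
      have h' : (-12:ℂ) * cA φ 0 (-1) = 0 := by linear_combination hG
      exact mulz h' (by norm_num)
    · have hG := G 1 0
      rw [hb2] at hG
      push_cast at hG
      have h' : (6*(k:ℂ)*((k:ℂ)+1)) * cA φ 0 k = 0 := by linear_combination hG
      refine mulz h' (mul_ne_zero (mul_ne_zero (by norm_num) (intCast_nzC hk)) ?_)
      intro hh
      apply hk1
      apply intCast_injC (x := k) (y := -1)
      push_cast
      linear_combination hh
  · have h2b : (2:ℂ) - b ≠ 0 := fun hh => hb2 (by linear_combination -hh)
    by_cases hX : b*((k:ℂ)+1)+(2-b)*a = 0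
    · have hG := G 1 1
      push_cast at hG
      have h' : ((k:ℂ)*(1+b)*(2-b)) * cA φ 0 k = 0 := by
        linear_combination hG - ((k:ℂ)*(1+b)*cA φ 0 k)*hX
      exact mulz h' (mul_ne_zero (mul_ne_zero (intCast_nzC hk) h1β) h2b)
    · have hG := G 1 0
      push_cast at hG
      have h' : ((k:ℂ)*(1+b)*(b*((k:ℂ)+1)+(2-b)*a)) * cA φ 0 k = 0 := by
        linear_combination hG
      exact mulz h' (mul_ne_zero (mul_ne_zero (intCast_nzC hk) h1β) hX)

lemma Aval (hb : b ≠ -1) (hφ : IsHalfDerivationSW a b φ) (n p : ℤ) :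
    cA φ n p = if p = n then cA φ 0 0 else 0 := by
  by_cases hnp : p = n
  · subst hnp; simp [Adiag hφ]
  · rw [if_neg hnp]
    have := Aoff hφ n (p-n) (by omega)
    rw [show n+(p-n) = p from by omega] at this
    rw [this, Aoff0 hb hφ (p-n) (by omega)]

lemma Qdiag (hb : b ≠ -1) (hφ : IsHalfDerivationSW a b φ) (n : ℤ) :
    cQ φ n n = cA φ 0 0 := by
  have tau : ∀ m x : ℤ, ((x:ℂ)+b*(m:ℂ)+a) *
      (2 * cQ φ (m+x) (m+x) - cA φ 0 0 - cQ φ x x) = 0 := by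
    intro m x
    have hE := eq5 hφ m x (m+x)
    rw [show m+x-x = m from by omega, show m+x-m = x from by omega] at hE
    rw [Adiag hφ m] at hE
    push_cast at hE
    linear_combination hE
  have base : ∀ x : ℤ, ((x:ℂ)+a) ≠ 0 → cQ φ x x = cA φ 0 0 := by
    intro x hx
    have ht := tau 0 x
    rw [show (0:ℤ)+x = x from by omega] at ht
    push_cast at ht
    have h' : ((x:ℂ)+a) * (cQ φ x x - cA φ 0 0) = 0 := by linear_combination ht
    have := mulz h' hx
    linear_combination this
  by_cases hna : ((n:ℂ)+a) = 0
  · by_cases hb1 : b = 1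
    · have ht := tau 1 n
      have hcond : ((1+n : ℤ):ℂ) + a ≠ 0 := by
        push_cast
        intro hh
        exact one_ne_zero (α := ℂ) (by linear_combination hh - hna)
      rw [base (1+n) hcond] at ht
      push_cast at ht
      linear_combination -ht + (cA φ 0 0 - cQ φ n n)*hna + (cA φ 0 0 - cQ φ n n)*hb1
    · have hbm1 : b - 1 ≠ 0 := sub_ne_zero_of_ne hb1
      have ht := tau 1 (n-1)
      rw [show 1+(n-1) = n from by omega] at ht
      have hcond : ((n-1 : ℤ):ℂ) + a ≠ 0 := by
        push_cast
        intro hh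
        exact one_ne_zero (α := ℂ) (by linear_combination hna - hh)
      rw [base (n-1) hcond] at ht
      push_cast at ht
      have h' : (b-1) * (2*cQ φ n n - 2*cA φ 0 0) = 0 := by
        linear_combination ht - (2*cQ φ n n - 2*cA φ 0 0)*hna
      have := mulz h' hbm1
      linear_combination this/2
  · exact base n hna

lemma Qoff (hb : b ≠ -1) (hφ : IsHalfDerivationSW a b φ) (n k : ℤ) (hk : k ≠ 0) :
    cQ φ n (n+k) = 0 := by
  have e0 := Aoff0 hb hφ k hk
  have V1 : ∀ x : ℤ, ((x:ℂ)+a-k) ≠ 0 → cQ φ x (x+k) = 0 := by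
    intro x hx
    have hq := Q1lem hφ k x
    rw [e0] at hq
    have h' : ((x:ℂ)+a-k) * cQ φ x (x+k) = 0 := by linear_combination hq
    exact mulz h' hx
  by_cases hres : ((n:ℂ)+a-(k:ℂ)) = 0
  · have inst : ∀ m : ℤ, m ≠ 0 → ((n:ℂ)+k+b*(m:ℂ)+a) * cQ φ n (n+k) = 0 := by
      intro m hm
      have hE := eq5 hφ m n (m+n+k)
      rw [show m+n+k-n = m+k from by omega, show m+n+k-m = n+k from by omega] at hE
      rw [Aoff hφ m k hk, e0] at hE
      have hcond : ((m+n : ℤ):ℂ) + a - (k:ℂ) ≠ 0 := by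
        push_cast
        intro hh
        exact intCast_nzC hm (by linear_combination hh - hres)
      rw [V1 (m+n) hcond] at hE
      push_cast at hE
      linear_combination -hE
    by_cases hc : 2*(k:ℂ)+b = 0
    · have h2 := inst (-1) (by omega)
      push_cast at h2
      have h' : (4*(k:ℂ)) * cQ φ n (n+k) = 0 := by
        linear_combination h2 - cQ φ n (n+k) * hres + cQ φ n (n+k) * hc
      exact mulz h' (mul_ne_zero (by norm_num) (intCast_nzC hk))
    · have h2 := inst 1 (by omega)
      push_cast at h2
      have h' : (2*(k:ℂ)+b) * cQ φ n (n+k) = 0 := by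
        linear_combination h2 - cQ φ n (n+k) * hres
      exact mulz h' hc
  · exact V1 n hres

lemma Woff (hb : b ≠ -1) (hφ : IsHalfDerivationSW a b φ) (n k : ℤ) (hk : k ≠ 0) :
    cW φ n (n+k) = 0 := by
  have e0 := Aoff0 hb hφ k hk
  have W1 : ∀ x : ℤ, ((x:ℂ)-k+(1+a)/2) ≠ 0 → cW φ x (x+k) = 0 := by
    intro x hx
    have hE := eq10 hφ 0 x (x+k)
    rw [show (0:ℤ)+x = x from by omega, show x+k-x = k from by omega,
        show x+k-(0:ℤ) = x+k from by omega] at hE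
    rw [e0] at hE
    push_cast at hE
    have h' : ((x:ℂ)-k+(1+a)/2) * cW φ x (x+k) = 0 := by linear_combination hE
    exact mulz h' hx
  by_cases hres : ((n:ℂ)-k+(1+a)/2) = 0
  · have inst : ∀ m : ℤ, m ≠ 0 →
        (2*(k:ℂ)+(m:ℂ)*(b-1)/2) * cW φ n (n+k) = 0 := by
      intro m hm
      have hE := eq10 hφ m n (m+n+k)
      rw [show m+n+k-n = m+k from by omega, show m+n+k-m = n+k from by omega] at hE
      rw [Aoff hφ m k hk, e0] at hE
      have hcond : ((m+n : ℤ):ℂ) - (k:ℂ) + (1+a)/2 ≠ 0 := by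
        push_cast
        intro hh
        exact intCast_nzC hm (by linear_combination hh - hres)
      rw [W1 (m+n) hcond] at hE
      push_cast at hE
      linear_combination -hE - cW φ n (n+k) * hres
    by_cases hc : 2*(k:ℂ)+(b-1)/2 = 0
    · have h2 := inst (-1) (by omega)
      push_cast at h2
      have h' : (4*(k:ℂ)) * cW φ n (n+k) = 0 := by
        linear_combination h2 + cW φ n (n+k) * hc
      exact mulz h' (mul_ne_zero (by norm_num) (intCast_nzC hk))
    · have h2 := inst 1 (by omega)
      push_cast at h2
      have h' : (2*(k:ℂ)+(b-1)/2) * cW φ n (n+k) = 0 := by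
        linear_combination h2
      exact mulz h' hc
  · exact W1 n hres

lemma Wdiag (hb : b ≠ -1) (hφ : IsHalfDerivationSW a b φ) (n : ℤ) :
    cW φ n n = cA φ 0 0 := by
  have pair : ∀ m x : ℤ, m ≠ x → cW φ m m + cW φ x x = 2*cA φ 0 0 := by
    intro m x hmx
    have hE := eq13 hφ m x (m+x+1)
    rw [show m+x+1-x-1 = m from by omega, show m+x+1-m-1 = x from by omega] at hE
    rw [Qdiag hb hφ (m+x+1)] at hE
    push_cast at hE
    have h' : ((x:ℂ)-m) * (cW φ m m + cW φ x x - 2*cA φ 0 0) = 0 := by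
      linear_combination -hE
    have hnz : ((x:ℂ)-m) ≠ 0 := by
      intro hh
      exact hmx (intCast_injC (x := m) (y := x) (by linear_combination -hh))
    have := mulz h' hnz
    linear_combination this
  have h01 := pair 0 1 (by omega)
  have h02 := pair 0 2 (by omega)
  have h12 := pair 1 2 (by omega)
  by_cases hn : n = 0
  · subst hn; linear_combination (h01 + h02 - h12)/2
  · have hp := pair n 0 hn
    linear_combination hp - (h01 + h02 - h12)/2

lemma Vk (hb : b ≠ -1) (hφ : IsHalfDerivationSW a b φ) (n k : ℤ) :
    cV φ n (n+k) = 0 := by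
  have V1 : ∀ x : ℤ, x ≠ k-1 → cV φ x (x+k) = 0 := by
    intro x hx
    have hE := eq9 hφ 0 x (x+k)
    rw [show (0:ℤ)+x = x from by omega, show x+k-x-1 = k-1 from by omega,
        show x+k-(0:ℤ) = x+k from by omega] at hE
    rw [Czero hb hφ 0 (k-1)] at hE
    push_cast at hE
    have h' : ((x:ℂ)+1-k) * cV φ x (x+k) = 0 := by linear_combination hE
    refine mulz h' ?_
    intro hh
    apply hx
    apply intCast_injC (x := x) (y := k-1)
    push_cast
    linear_combination hh
  by_cases hres : n = k-1
  · subst hres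
    by_cases hc1 : ((k:ℂ)-1+k+b+a) = 0
    · -- use instance (m, n') = (1, k-2), p = (k-1)+k
      have hE := eq9 hφ 1 (k-2) (k-1+k)
      rw [show (1:ℤ)+(k-2) = k-1 from by omega,
          show k-1+k-(k-2)-1 = k from by omega,
          show k-1+k-1 = k-2+k from by omega] at hE
      rw [Czero hb hφ 1 k, V1 (k-2) (by omega)] at hE
      push_cast at hE
      have h' : (-3/2 : ℂ) * cV φ (k-1) (k-1+k) = 0 := by
        linear_combination hE/2 - (cV φ (k-1) (k-1+k)/2) * hc1
      exact mulz h' (by norm_num)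
    · have hE := eq9 hφ 1 (k-1) (1+(k-1)+k)
      rw [show 1+(k-1)+k-(k-1)-1 = k from by omega,
          show 1+(k-1)+k-1 = (k-1)+k from by omega] at hE
      rw [Czero hb hφ 1 k, V1 (1+(k-1)) (by omega)] at hE
      push_cast at hE
      have h' : ((k:ℂ)-1+k+b+a) * cV φ (k-1) (k-1+k) = 0 := by
        linear_combination -hE
      exact mulz h' hc1
  · exact V1 n hres

lemma Vzero (hb : b ≠ -1) (hφ : IsHalfDerivationSW a b φ) (n p : ℤ) :
    cV φ n p = 0 := by
  have := Vk hb hφ n (p-n)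
  rwa [show n+(p-n) = p from by omega] at this

lemma U1lem (hφ : IsHalfDerivationSW a b φ) (x p : ℤ)
    (hx : (2*(x:ℂ)+1+a-(p:ℂ)) ≠ 0) : cU φ x p = 0 := by
  have hE := eq8 hφ 0 x p
  rw [show (0:ℤ)+x = x from by omega, show p-(0:ℤ) = p from by omega] at hE
  push_cast at hE
  have h' : (2*(x:ℂ)+1+a-(p:ℂ)) * cU φ x p = 0 := by linear_combination hE
  exact mulz h' hx

lemma Rzero (hb : b ≠ -1) (hφ : IsHalfDerivationSW a b φ) (m j : ℤ) :
    cR φ m j = 0 := by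
  by_cases hres : ((j:ℂ)+1+a+(m:ℂ)-(j:ℂ)) = 0
  · have hE := eq16 hφ m (j+2) (2*j+3)
    rw [show 2*j+3-(j+2)-1 = j from by omega] at hE
    have hcond : (2*((j+2 : ℤ):ℂ)+1+a-((2*j+3-m : ℤ):ℂ)) ≠ 0 := by
      push_cast
      intro hh
      exact one_ne_zero (α := ℂ) (by linear_combination hh - hres)
    rw [U1lem hφ (j+2) (2*j+3-m) hcond] at hE
    push_cast at hE
    have h' : (2:ℂ) * cR φ m j = 0 := by linear_combination -hE
    exact mulz h' (by norm_num)
  · have hE := eq16 hφ m (j+1) (2*j+2)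
    rw [show 2*j+2-(j+1)-1 = j from by omega] at hE
    have hcond : (2*((j+1 : ℤ):ℂ)+1+a-((2*j+2-m : ℤ):ℂ)) ≠ 0 := by
      push_cast
      intro hh
      exact hres (by linear_combination hh)
    rw [U1lem hφ (j+1) (2*j+2-m) hcond] at hE
    push_cast at hE
    have h' : (1:ℂ) * cR φ m j = 0 := by linear_combination -hE
    exact mulz h' one_ne_zero

lemma Uzero (hb : b ≠ -1) (hφ : IsHalfDerivationSW a b φ) (n i : ℤ) :
    cU φ n i = 0 := by
  by_cases h0 : b*(i:ℂ)+a = 0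
  · have hE := eq16 hφ 1 n (1+i)
    rw [show 1+i-n-1 = i-n from by omega, show 1+i-1 = i from by omega] at hE
    rw [Rzero hb hφ 1 (i-n)] at hE
    push_cast at hE
    have h' : (1:ℂ) * cU φ n i = 0 := by
      linear_combination hE - cU φ n i * h0
    exact mulz h' one_ne_zero
  · have hE := eq16 hφ 0 n i
    rw [Rzero hb hφ 0 (i-n-1), show i-(0:ℤ) = i from by omega] at hE
    push_cast at hE
    have h' : (b*(i:ℂ)+a) * cU φ n i = 0 := by linear_combination hE
    exact mulz h' h0

end Families2


theorem stmt3aux (a b : ℂ) (hb : b ≠ -1) (φ : SW →ₗ[ℂ] SW)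
    (hφ : IsHalfDerivationSW a b φ) :
    ∃ c : ℂ, φ = c • LinearMap.id := by
  refine ⟨cA φ 0 0, ?_⟩
  have hbasis : ∀ u : SWBasis, φ (Finsupp.single u 1)
      = cA φ 0 0 • Finsupp.single u 1 := by
    intro u
    ext v
    rw [Finsupp.smul_apply]
    cases u with
    | L n =>
        cases v with
        | L p =>
            have := Aval hb hφ n p
            rw [show φ (Finsupp.single (SWBasis.L n) 1) (SWBasis.L p)
                = cA φ n p from rfl, this, Finsupp.single_apply]
            by_cases hnp : p = n
            · subst hnp; simp
            · rw [if_neg hnp, if_neg (by simpa [eq_comm] using hnp)]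
              simp
        | I p =>
            rw [show φ (Finsupp.single (SWBasis.L n) 1) (SWBasis.I p)
                = cB φ n p from rfl, Bzero hb hφ n p]
            simp [Finsupp.single_apply]
        | Y p =>
            rw [show φ (Finsupp.single (SWBasis.L n) 1) (SWBasis.Y p)
                = cC φ n p from rfl, Czero hb hφ n p]
            simp [Finsupp.single_apply]
    | I n =>
        cases v with
        | L p =>
            rw [show φ (Finsupp.single (SWBasis.I n) 1) (SWBasis.L p)
                = cP φ n p from rfl, Pzero hφ n p]
            simp [Finsupp.single_apply]
        | I p =>
            rw [show φ (Finsupp.single (SWBasis.I n) 1) (SWBasis.I p)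
                = cQ φ n p from rfl, Finsupp.single_apply]
            by_cases hnp : p = n
            · subst hnp; simp [Qdiag hb hφ]
            · have := Qoff hb hφ n (p-n) (by omega)
              rw [show n+(p-n) = p from by omega] at this
              rw [this, if_neg (by simpa [eq_comm] using hnp)]
              simp
        | Y p =>
            rw [show φ (Finsupp.single (SWBasis.I n) 1) (SWBasis.Y p)
                = cR φ n p from rfl, Rzero hb hφ n p]
            simp [Finsupp.single_apply]
    | Y n =>
        cases v with
        | L p =>
            rw [show φ (Finsupp.single (SWBasis.Y n) 1) (SWBasis.L p)
                = cU φ n p from rfl, Uzero hb hφ n p]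
            simp [Finsupp.single_apply]
        | I p =>
            rw [show φ (Finsupp.single (SWBasis.Y n) 1) (SWBasis.I p)
                = cV φ n p from rfl, Vzero hb hφ n p]
            simp [Finsupp.single_apply]
        | Y p =>
            rw [show φ (Finsupp.single (SWBasis.Y n) 1) (SWBasis.Y p)
                = cW φ n p from rfl, Finsupp.single_apply]
            by_cases hnp : p = n
            · subst hnp; simp [Wdiag hb hφ]
            · have := Woff hb hφ n (p-n) (by omega)
              rw [show n+(p-n) = p from by omega] at this
              rw [this, if_neg (by simpa [eq_comm] using hnp)]
              simp
  apply Finsupp.lhom_ext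
  intro u t
  have hst : (Finsupp.single u t : SW) = t • Finsupp.single u 1 := by
    rw [Finsupp.smul_single, smul_eq_mul, mul_one]
  rw [hst, map_smul, hbasis u, LinearMap.smul_apply, LinearMap.id_apply]
  rw [smul_comm]

/-- for b ≠ −1, every ½-derivation of 𝒲(a,b,1/2) is a scalar
multiple of the identity. -/
theorem stmt3 (a b : ℂ) (hb : b ≠ -1) (φ : SW →ₗ[ℂ] SW)
    (hφ : IsHalfDerivationSW a b φ) :
    ∃ c : ℂ, φ = c • LinearMap.id := by
  exact stmt3aux a b hb φ hφ
end

section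
/- Let a ∈ ℂ and let {α_t}_{t∈ℤ}, {β_t}_{t∈ℤ}, {γ_t}_{t∈ℤ} be finitely supported families of complex numbers. Then the linear map φ on the deformative Schrödinger–Witt algebra 𝒲(a,−1,1/2) defined on basis elements by φ(L_m) = Σ_t α_t·L_{m+t} + Σ_t β_t·I_{m+t} + Σ_t γ_t·Y_{m+t}, φ(I_m) = Σ_t α_t·I_{m+t}, and φ(Y_m) = Σ_t α_t·Y_{m+t} + Σ_t γ_t·I_{m+t+1} is a ½-derivation of 𝒲(a,−1,1/2). -/
@[simp] lemma swBracket_single_single (a b : ℂ) (x y : SWBasis) (c d : ℂ) :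
    swBracket a b (Finsupp.single x c) (Finsupp.single y d)
      = (c * d) • swBracketBasis a b x y := by
  simp [swBracket, Finsupp.lift_apply, Finsupp.sum_single_index, mul_smul]

noncomputable def Da (t : ℤ) : SW →ₗ[ℂ] SW :=
  Finsupp.lift SW ℂ SWBasis fun x => match x with
    | .L m => Lb (m + t)
    | .I m => Ib (m + t)
    | .Y m => Yb (m + t)

noncomputable def Db (t : ℤ) : SW →ₗ[ℂ] SW :=
  Finsupp.lift SW ℂ SWBasis fun x => match x with
    | .L m => Ib (m + t)
    | _ => 0

noncomputable def Dc (t : ℤ) : SW →ₗ[ℂ] SW :=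
  Finsupp.lift SW ℂ SWBasis fun x => match x with
    | .L m => Yb (m + t)
    | .I _ => 0
    | .Y m => Ib (m + t + 1)

@[simp] lemma Da_L (t m : ℤ) (c : ℂ) :
    Da t (Finsupp.single (SWBasis.L m) c) = Finsupp.single (SWBasis.L (m + t)) c := by
  simp [Da, Finsupp.lift_apply, Finsupp.sum_single_index, Lb, Finsupp.smul_single]
@[simp] lemma Da_I (t m : ℤ) (c : ℂ) :
    Da t (Finsupp.single (SWBasis.I m) c) = Finsupp.single (SWBasis.I (m + t)) c := by
  simp [Da, Finsupp.lift_apply, Finsupp.sum_single_index, Ib, Finsupp.smul_single]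
@[simp] lemma Da_Y (t m : ℤ) (c : ℂ) :
    Da t (Finsupp.single (SWBasis.Y m) c) = Finsupp.single (SWBasis.Y (m + t)) c := by
  simp [Da, Finsupp.lift_apply, Finsupp.sum_single_index, Yb, Finsupp.smul_single]
@[simp] lemma Db_L (t m : ℤ) (c : ℂ) :
    Db t (Finsupp.single (SWBasis.L m) c) = Finsupp.single (SWBasis.I (m + t)) c := by
  simp [Db, Finsupp.lift_apply, Finsupp.sum_single_index, Ib, Finsupp.smul_single]
@[simp] lemma Db_I (t m : ℤ) (c : ℂ) :
    Db t (Finsupp.single (SWBasis.I m) c) = 0 := by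
  simp [Db, Finsupp.lift_apply, Finsupp.sum_single_index]
@[simp] lemma Db_Y (t m : ℤ) (c : ℂ) :
    Db t (Finsupp.single (SWBasis.Y m) c) = 0 := by
  simp [Db, Finsupp.lift_apply, Finsupp.sum_single_index]
@[simp] lemma Dc_L (t m : ℤ) (c : ℂ) :
    Dc t (Finsupp.single (SWBasis.L m) c) = Finsupp.single (SWBasis.Y (m + t)) c := by
  simp [Dc, Finsupp.lift_apply, Finsupp.sum_single_index, Yb, Finsupp.smul_single]
@[simp] lemma Dc_I (t m : ℤ) (c : ℂ) :
    Dc t (Finsupp.single (SWBasis.I m) c) = 0 := by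
  simp [Dc, Finsupp.lift_apply, Finsupp.sum_single_index]
@[simp] lemma Dc_Y (t m : ℤ) (c : ℂ) :
    Dc t (Finsupp.single (SWBasis.Y m) c) = Finsupp.single (SWBasis.I (m + t + 1)) c := by
  simp [Dc, Finsupp.lift_apply, Finsupp.sum_single_index, Ib, Finsupp.smul_single]

lemma isHalfDerivation_of_basis (a b : ℂ) (φ : SW →ₗ[ℂ] SW)
    (h : ∀ x y : SWBasis, φ (swBracketBasis a b x y) =
      (1/2 : ℂ) • (swBracket a b (φ (Finsupp.single x 1)) (Finsupp.single y 1)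
        + swBracket a b (Finsupp.single x 1) (φ (Finsupp.single y 1)))) :
    IsHalfDerivationSW a b φ := by
  have hFG : (swBracket a b).compr₂ φ
      = (1/2 : ℂ) • ((swBracket a b).comp φ + (swBracket a b).compl₂ φ) := by
    apply Finsupp.lhom_ext
    intro x c
    apply Finsupp.lhom_ext
    intro y d
    have h1 : (Finsupp.single x c : SW) = c • Finsupp.single x 1 := by
      simp [Finsupp.smul_single]
    have h2 : (Finsupp.single y d : SW) = d • Finsupp.single y 1 := by
      simp [Finsupp.smul_single]
    simp only [LinearMap.compr₂_apply, LinearMap.comp_apply, LinearMap.compl₂_apply,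
      LinearMap.smul_apply, LinearMap.add_apply, h1, h2, map_smul, LinearMap.smul_apply]
    rw [show swBracket a b (Finsupp.single x 1) (Finsupp.single y 1)
        = swBracketBasis a b x y by simp]
    rw [h x y]
  intro x y
  have := LinearMap.congr_fun (LinearMap.congr_fun hFG x) y
  simpa using this

lemma halfDer_Da (a : ℂ) (t : ℤ) : IsHalfDerivationSW a (-1) (Da t) := by
  apply isHalfDerivation_of_basis
  intro x y
  cases x <;> cases y
  all_goals rename_i m n
  all_goals simp only [swBracketBasis, Lb, Ib, Yb, map_smul, map_neg, map_zero,
    Da_L, Da_I, Da_Y, Db_L, Db_I, Db_Y, Dc_L, Dc_I, Dc_Y,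
    swBracket_single_single, one_mul, one_smul, smul_zero, add_zero, zero_add,
    smul_add, smul_neg, neg_zero, LinearMap.zero_apply]
  all_goals try push_cast
  all_goals try simp only [add_comm, add_left_comm, add_assoc]
  all_goals module

lemma halfDer_Db (a : ℂ) (t : ℤ) : IsHalfDerivationSW a (-1) (Db t) := by
  apply isHalfDerivation_of_basis
  intro x y
  cases x <;> cases y
  all_goals rename_i m n
  all_goals simp only [swBracketBasis, Lb, Ib, Yb, map_smul, map_neg, map_zero,
    Da_L, Da_I, Da_Y, Db_L, Db_I, Db_Y, Dc_L, Dc_I, Dc_Y,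
    swBracket_single_single, one_mul, one_smul, smul_zero, add_zero, zero_add,
    smul_add, smul_neg, neg_zero, LinearMap.zero_apply]
  all_goals try push_cast
  all_goals try simp only [add_comm, add_left_comm, add_assoc]
  all_goals module

lemma halfDer_Dc (a : ℂ) (t : ℤ) : IsHalfDerivationSW a (-1) (Dc t) := by
  apply isHalfDerivation_of_basis
  intro x y
  cases x <;> cases y
  all_goals rename_i m n
  all_goals simp only [swBracketBasis, Lb, Ib, Yb, map_smul, map_neg, map_zero,
    Da_L, Da_I, Da_Y, Db_L, Db_I, Db_Y, Dc_L, Dc_I, Dc_Y,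
    swBracket_single_single, one_mul, one_smul, smul_zero, add_zero, zero_add,
    smul_add, smul_neg, neg_zero, LinearMap.zero_apply]
  all_goals try push_cast
  all_goals try simp only [add_comm, add_left_comm, add_assoc]
  all_goals module

lemma halfDer_zero (a b : ℂ) : IsHalfDerivationSW a b (0 : SW →ₗ[ℂ] SW) := by
  intro x y; simp

lemma halfDer_add {a b : ℂ} {f g : SW →ₗ[ℂ] SW}
    (hf : IsHalfDerivationSW a b f) (hg : IsHalfDerivationSW a b g) :
    IsHalfDerivationSW a b (f + g) := by
  intro x y
  simp only [LinearMap.add_apply, map_add, hf x y, hg x y, smul_add]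
  abel

lemma halfDer_smul {a b : ℂ} (c : ℂ) {f : SW →ₗ[ℂ] SW}
    (hf : IsHalfDerivationSW a b f) :
    IsHalfDerivationSW a b (c • f) := by
  intro x y
  simp only [LinearMap.smul_apply, map_smul, hf x y, smul_add]
  module

lemma halfDer_sum {ι : Type*} (a b : ℂ) (s : Finset ι) (D : ι → SW →ₗ[ℂ] SW)
    (h : ∀ i ∈ s, IsHalfDerivationSW a b (D i)) :
    IsHalfDerivationSW a b (∑ i ∈ s, D i) := by
  classical
  induction s using Finset.induction_on with
  | empty => simpa using halfDer_zero a b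
  | insert _ _ hx ih =>
      rw [Finset.sum_insert hx]
      exact halfDer_add (h _ (Finset.mem_insert_self _ _))
        (ih fun i hi => h i (Finset.mem_insert_of_mem hi))

/-- conversely, for any finitely supported families α, β, γ,
the linear map defined by the corresponding formulas on basis elements is a
½-derivation of 𝒲(a,−1,1/2). -/
theorem stmt5 (a : ℂ) (α β γ : ℤ →₀ ℂ) (φ : SW →ₗ[ℂ] SW)
    (hL : ∀ m : ℤ, φ (Lb m) =
        α.sum (fun t c => c • Lb (m + t)) +
        β.sum (fun t c => c • Ib (m + t)) +
        γ.sum (fun t c => c • Yb (m + t)))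
    (hI : ∀ m : ℤ, φ (Ib m) = α.sum (fun t c => c • Ib (m + t)))
    (hY : ∀ m : ℤ, φ (Yb m) =
        α.sum (fun t c => c • Yb (m + t)) +
        γ.sum (fun t c => c • Ib (m + t + 1))) :
    IsHalfDerivationSW a (-1) φ := by
  have hφ : φ = (α.sum fun t c => c • Da t) + (β.sum fun t c => c • Db t) +
      (γ.sum fun t c => c • Dc t) := by
    apply Finsupp.lhom_ext
    intro x c
    have hc : (Finsupp.single x c : SW) = c • Finsupp.single x 1 := by
      simp [Finsupp.smul_single]
    rw [hc, map_smul, map_smul]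
    congr 1
    cases x with
    | L m =>
        rw [show (Finsupp.single (SWBasis.L m) (1:ℂ)) = Lb m from rfl, hL m]
        simp [Finsupp.sum, LinearMap.sum_apply, LinearMap.add_apply,
          LinearMap.smul_apply, Lb, Ib, Yb, Finsupp.smul_single]
    | I m =>
        rw [show (Finsupp.single (SWBasis.I m) (1:ℂ)) = Ib m from rfl, hI m]
        simp [Finsupp.sum, LinearMap.sum_apply, LinearMap.add_apply,
          LinearMap.smul_apply, Ib, Finsupp.smul_single]
    | Y m =>
        rw [show (Finsupp.single (SWBasis.Y m) (1:ℂ)) = Yb m from rfl, hY m]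
        simp [Finsupp.sum, LinearMap.sum_apply, LinearMap.add_apply,
          LinearMap.smul_apply, Yb, Ib, Finsupp.smul_single]
  rw [hφ]
  exact halfDer_add
    (halfDer_add
      (halfDer_sum a (-1) _ _ fun t _ => halfDer_smul _ (halfDer_Da a t))
      (halfDer_sum a (-1) _ _ fun t _ => halfDer_smul _ (halfDer_Db a t)))
    (halfDer_sum a (-1) _ _ fun t _ => halfDer_smul _ (halfDer_Dc a t))
end
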